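/- arXiv:math/0703879 — 3 statements merged into one kernel-verified Lean document; each statement's English description precedes it below -/
import Mathlib

section
/- Let G₁ and G₂ be groups and let p : G₁ ∗ G₂ → G₁ × G₂ be the canonical homomorphism determined by g₁ ↦ (g₁, 1) for g₁ ∈ G₁ and g₂ ↦ (1, g₂) for g₂ ∈ G₂. If H₁ ≤ G₁ and H₂ ≤ G₂ are subgroups that are free groups, then the preimage p⁻¹(H₁ × H₂) is a free group; moreover, if H₁ and H₂ have finite index in G₁ and G₂ respectively, then p⁻¹(H₁ × H₂) has finite index in G₁ ∗ G₂. -/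
open Monoid

namespace KuroshAux

section Sec

variable {G : Type*} [Group G] (H : Subgroup G)

/-- The base point of the coset space. -/
def bp : G ⧸ H := QuotientGroup.mk 1

/-- Normalized section of the quotient map, sending the base coset to `1`. -/
noncomputable def sec (u : G ⧸ H) : G :=
  open scoped Classical in if u = bp H then 1 else u.out

@[simp] lemma mk_sec (u : G ⧸ H) : (QuotientGroup.mk (sec H u) : G ⧸ H) = u := by
  rw [sec]
  split_ifs with h
  · rw [h]; rfl
  · exact QuotientGroup.out_eq' u

@[simp] lemma sec_bp : sec H (bp H) = 1 := by simp [sec]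

lemma smul_mk_bp (g : G) : g • bp H = QuotientGroup.mk g := by
  rw [bp, MulAction.Quotient.smul_mk]
  simp

lemma smul_bp_of_mem {g : G} (hg : g ∈ H) : g • bp H = bp H := by
  rw [smul_mk_bp, bp, QuotientGroup.eq]
  simpa using hg

lemma sec_smul_bp (u : G ⧸ H) : sec H u • bp H = u := by
  rw [smul_mk_bp, mk_sec]

lemma sec_inv_smul (u : G ⧸ H) : (sec H u)⁻¹ • u = bp H := by
  rw [inv_smul_eq_iff, sec_smul_bp]

lemma sch_mem (a : G) (u : G ⧸ H) : (sec H (a • u))⁻¹ * a * sec H u ∈ H := by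
  rw [mul_assoc, ← QuotientGroup.eq]
  have : QuotientGroup.mk (a * sec H u) = a • (QuotientGroup.mk (sec H u) : G ⧸ H) :=
    (MulAction.Quotient.smul_mk H a (sec H u)).symm
  rw [this, mk_sec, mk_sec]

/-- Schreier element associated to `a : G` and a coset `u`. -/
noncomputable def sch (a : G) (u : G ⧸ H) : H :=
  ⟨(sec H (a • u))⁻¹ * a * sec H u, sch_mem H a u⟩

lemma sch_coe (a : G) (u : G ⧸ H) :
    (sch H a u : G) = (sec H (a • u))⁻¹ * a * sec H u := rfl

lemma sch_mul (a b : G) (u : G ⧸ H) :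
    sch H (a * b) u = sch H a (b • u) * sch H b u := by
  ext
  push_cast [sch_coe, mul_smul]
  group

lemma sch_of_mem {h : G} (hh : h ∈ H) : sch H h (bp H) = ⟨h, hh⟩ := by
  ext
  rw [sch_coe, smul_bp_of_mem H hh, sec_bp]
  group

lemma sch_sec_inv (u : G ⧸ H) : sch H (sec H u)⁻¹ u = 1 := by
  ext
  rw [sch_coe, sec_inv_smul, sec_bp]
  group
  simp

lemma sch_sec_one (u : G ⧸ H) : sch H (sec H u) (bp H) = 1 := by
  ext
  rw [sch_coe, sec_smul_bp, sec_bp]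
  group
  simp

end Sec


section Main

universe u₁ u₂

variable {G₁ : Type u₁} {G₂ : Type u₂} [Group G₁] [Group G₂]
  (H₁ : Subgroup G₁) (H₂ : Subgroup G₂)

/-- Index type for the Kurosh decomposition. -/
abbrev Idx : Type _ := ((G₂ ⧸ H₂) ⊕ (G₁ ⧸ H₁)) ⊕ Unit

/-- Index type of the free part. -/
abbrev FIdx : Type _ := {u : G₁ ⧸ H₁ // u ≠ bp H₁} × {v : G₂ ⧸ H₂ // v ≠ bp H₂}

/-- The family of groups in the Kurosh decomposition. -/
abbrev Fam : Idx H₁ H₂ → Type (max u₁ u₂) :=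
  Sum.elim (Sum.elim (fun _ => ULift.{u₂} H₁) (fun _ => ULift.{u₁} H₂))
    (fun _ => FreeGroup (FIdx H₁ H₂))

instance famGroup : ∀ i, Group (Fam H₁ H₂ i) := by
  rintro ((v | u) | u) <;> dsimp [Fam] <;> infer_instance

/-- The abstract Kurosh group. -/
abbrev LL := Monoid.CoprodI (Fam H₁ H₂)

/-- Copy of `H₁` indexed by `v`. -/
def αgen (v : G₂ ⧸ H₂) : H₁ →* LL H₁ H₂ :=
  (@Monoid.CoprodI.of _ (Fam H₁ H₂) _ (Sum.inl (Sum.inl v))).comp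
    (MulEquiv.ulift.symm : H₁ ≃* ULift H₁).toMonoidHom

/-- Copy of `H₂` indexed by `u`. -/
def βgen (u : G₁ ⧸ H₁) : H₂ →* LL H₁ H₂ :=
  (@Monoid.CoprodI.of _ (Fam H₁ H₂) _ (Sum.inl (Sum.inr u))).comp
    (MulEquiv.ulift.symm : H₂ ≃* ULift H₂).toMonoidHom

/-- The free part. -/
def fgen : FreeGroup (FIdx H₁ H₂) →* LL H₁ H₂ :=
  @Monoid.CoprodI.of _ (Fam H₁ H₂) _ (Sum.inr ())

/-- Free letters, extended by `1` on basepoint rows/columns. -/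
noncomputable def τgen (u : G₁ ⧸ H₁) (v : G₂ ⧸ H₂) : LL H₁ H₂ :=
  open scoped Classical in
  if h : u = bp H₁ ∨ v = bp H₂ then 1
  else fgen H₁ H₂ (FreeGroup.of (⟨u, fun hh => h (Or.inl hh)⟩, ⟨v, fun hh => h (Or.inr hh)⟩))

lemma τgen_bp_left (v : G₂ ⧸ H₂) : τgen H₁ H₂ (bp H₁) v = 1 := by
  rw [τgen, dif_pos (Or.inl rfl)]

lemma τgen_bp_right (u : G₁ ⧸ H₁) : τgen H₁ H₂ u (bp H₂) = 1 := by
  rw [τgen, dif_pos (Or.inr rfl)]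

lemma τgen_of_ne {u : G₁ ⧸ H₁} {v : G₂ ⧸ H₂} (hu : u ≠ bp H₁) (hv : v ≠ bp H₂) :
    τgen H₁ H₂ u v = fgen H₁ H₂ (FreeGroup.of (⟨u, hu⟩, ⟨v, hv⟩)) := by
  rw [τgen, dif_neg (by tauto)]

open Monoid.Coprod in
/-- The element `d⁻¹ c⁻¹ d c` of the free product. -/
noncomputable def gElt (u : G₁ ⧸ H₁) (v : G₂ ⧸ H₂) : Monoid.Coprod G₁ G₂ :=
  (inl (sec H₁ u))⁻¹ * (inr (sec H₂ v))⁻¹ * inl (sec H₁ u) * inr (sec H₂ v)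

open Monoid.Coprod in
/-- The component homomorphisms of `ψ`. -/
noncomputable def ψfam : ∀ i, Fam H₁ H₂ i →* Monoid.Coprod G₁ G₂ := by
  rintro ((v | u) | u)
  · exact ((MulAut.conj ((inr (sec H₂ v) : Monoid.Coprod G₁ G₂)⁻¹)).toMonoidHom.comp
      ((inl : G₁ →* Monoid.Coprod G₁ G₂).comp H₁.subtype)).comp
      (MulEquiv.ulift : ULift H₁ ≃* H₁).toMonoidHom
  · exact ((MulAut.conj ((inl (sec H₁ u) : Monoid.Coprod G₁ G₂)⁻¹)).toMonoidHom.comp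
      ((inr : G₂ →* Monoid.Coprod G₁ G₂).comp H₂.subtype)).comp
      (MulEquiv.ulift : ULift H₂ ≃* H₂).toMonoidHom
  · exact FreeGroup.lift (fun t => gElt H₁ H₂ t.1.1 t.2.1)

/-- The homomorphism from the abstract Kurosh group to the free product. -/
noncomputable def ψ : LL H₁ H₂ →* Monoid.Coprod G₁ G₂ :=
  Monoid.CoprodI.lift (ψfam H₁ H₂)

open Monoid.Coprod in
lemma ψ_α (v : G₂ ⧸ H₂) (h : H₁) :
    ψ H₁ H₂ (αgen H₁ H₂ v h) =
      (inr (sec H₂ v))⁻¹ * inl (h : G₁) * inr (sec H₂ v) := by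
  show Monoid.CoprodI.lift (ψfam H₁ H₂) (Monoid.CoprodI.of _) = _
  rw [Monoid.CoprodI.lift_of]
  simp [ψfam, MulAut.conj, mul_assoc]
  rfl

open Monoid.Coprod in
lemma ψ_β (u : G₁ ⧸ H₁) (h : H₂) :
    ψ H₁ H₂ (βgen H₁ H₂ u h) =
      (inl (sec H₁ u))⁻¹ * inr (h : G₂) * inl (sec H₁ u) := by
  show Monoid.CoprodI.lift (ψfam H₁ H₂) (Monoid.CoprodI.of _) = _
  rw [Monoid.CoprodI.lift_of]
  simp [ψfam, MulAut.conj, mul_assoc]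
  rfl

lemma ψ_τ (u : G₁ ⧸ H₁) (v : G₂ ⧸ H₂) :
    ψ H₁ H₂ (τgen H₁ H₂ u v) = gElt H₁ H₂ u v := by
  rw [τgen]
  split_ifs with h
  · rcases h with h | h <;> subst h <;>
      simp [gElt, map_one, sec_bp] <;> group
  · show Monoid.CoprodI.lift (ψfam H₁ H₂) (Monoid.CoprodI.of _) = _
    erw [Monoid.CoprodI.lift_of]
    simp [ψfam, FreeGroup.lift_apply_of]
    exact FreeGroup.lift_apply_of

end Main
section Wreath

universe u₁ u₂

variable {G₁ : Type u₁} {G₂ : Type u₂} [Group G₁] [Group G₂]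
  (H₁ : Subgroup G₁) (H₂ : Subgroup G₂)

/-- The product of the two coset spaces. -/
abbrev XX : Type _ := (G₁ ⧸ H₁) × (G₂ ⧸ H₂)

/-- The basepoint. -/
def x₀ : XX H₁ H₂ := (bp H₁, bp H₂)

/-- Permutations act on functions by precomposition with the inverse. -/
def permMulAut (Y Z : Type*) [Group Z] : Equiv.Perm Y →* MulAut (Y → Z) where
  toFun π :=
    { toFun := fun f => f ∘ π.symm
      invFun := fun f => f ∘ π
      left_inv := fun f => by ext y; simp
      right_inv := fun f => by ext y; simp
      map_mul' := fun f g => rfl }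
  map_one' := by ext f y; rfl
  map_mul' := fun π₁ π₂ => by ext f y; rfl

/-- The wreath-type group receiving the rewriting homomorphism. -/
abbrev WW := (XX H₁ H₂ → LL H₁ H₂) ⋊[permMulAut (XX H₁ H₂) (LL H₁ H₂)] Equiv.Perm (XX H₁ H₂)

/-- First factor of the rewriting homomorphism. -/
noncomputable def Φ₁ : G₁ →* WW H₁ H₂ :=
  MonoidHom.mk'
    (fun a => ⟨fun x => αgen H₁ H₂ x.2 (sch H₁ a (a⁻¹ • x.1)),
      Equiv.prodCongr (MulAction.toPerm a) (Equiv.refl _)⟩)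
    (by
      intro a b
      refine SemidirectProduct.ext (funext fun x => ?_) ?_
      · show αgen H₁ H₂ x.2 (sch H₁ (a * b) ((a * b)⁻¹ • x.1)) =
          αgen H₁ H₂ x.2 (sch H₁ a (a⁻¹ • x.1)) *
            αgen H₁ H₂ x.2 (sch H₁ b (b⁻¹ • a⁻¹ • x.1))
        rw [← map_mul]
        congr 1
        have h2 : (a * b)⁻¹ • x.1 = b⁻¹ • a⁻¹ • x.1 := by rw [mul_inv_rev, mul_smul]
        have hb : b • (b⁻¹ • a⁻¹ • x.1) = a⁻¹ • x.1 := by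
          rw [smul_smul, mul_inv_cancel, one_smul]
        rw [h2, sch_mul, hb]
      · show Equiv.prodCongr (MulAction.toPerm (a * b)) (Equiv.refl _) =
          Equiv.prodCongr (MulAction.toPerm a) (Equiv.refl _) *
            Equiv.prodCongr (MulAction.toPerm b) (Equiv.refl _)
        refine Equiv.ext fun y => ?_
        simp [Prod.map, mul_smul, Equiv.Perm.mul_apply])

/-- Second factor of the rewriting homomorphism. -/
noncomputable def Φ₂ : G₂ →* WW H₁ H₂ :=
  MonoidHom.mk'
    (fun b => ⟨fun x => (τgen H₁ H₂ x.1 x.2)⁻¹ * βgen H₁ H₂ x.1 (sch H₂ b (b⁻¹ • x.2)) *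
        τgen H₁ H₂ x.1 (b⁻¹ • x.2),
      Equiv.prodCongr (Equiv.refl _) (MulAction.toPerm b)⟩)
    (by
      intro a b
      refine SemidirectProduct.ext (funext fun x => ?_) ?_
      · show (τgen H₁ H₂ x.1 x.2)⁻¹ * βgen H₁ H₂ x.1 (sch H₂ (a * b) ((a * b)⁻¹ • x.2)) *
            τgen H₁ H₂ x.1 ((a * b)⁻¹ • x.2) =
          ((τgen H₁ H₂ x.1 x.2)⁻¹ * βgen H₁ H₂ x.1 (sch H₂ a (a⁻¹ • x.2)) *
              τgen H₁ H₂ x.1 (a⁻¹ • x.2)) *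
            ((τgen H₁ H₂ x.1 (a⁻¹ • x.2))⁻¹ *
              βgen H₁ H₂ x.1 (sch H₂ b (b⁻¹ • a⁻¹ • x.2)) * τgen H₁ H₂ x.1 (b⁻¹ • a⁻¹ • x.2))
        have h2 : (a * b)⁻¹ • x.2 = b⁻¹ • a⁻¹ • x.2 := by rw [mul_inv_rev, mul_smul]
        have hb : b • (b⁻¹ • a⁻¹ • x.2) = a⁻¹ • x.2 := by
          rw [smul_smul, mul_inv_cancel, one_smul]
        rw [h2, sch_mul, hb, map_mul]
        group
      · show Equiv.prodCongr (Equiv.refl _) (MulAction.toPerm (a * b)) =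
          Equiv.prodCongr (Equiv.refl _) (MulAction.toPerm a) *
            Equiv.prodCongr (Equiv.refl _) (MulAction.toPerm b)
        refine Equiv.ext fun y => ?_
        simp [Prod.map, mul_smul, Equiv.Perm.mul_apply])

/-- The rewriting homomorphism. -/
noncomputable def Φ : Monoid.Coprod G₁ G₂ →* WW H₁ H₂ :=
  Monoid.Coprod.lift (Φ₁ H₁ H₂) (Φ₂ H₁ H₂)

lemma Φ_inl (a : G₁) : Φ H₁ H₂ (Monoid.Coprod.inl a) = Φ₁ H₁ H₂ a :=
  Monoid.Coprod.lift_apply_inl _ _ _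

lemma Φ_inr (b : G₂) : Φ H₁ H₂ (Monoid.Coprod.inr b) = Φ₂ H₁ H₂ b :=
  Monoid.Coprod.lift_apply_inr _ _ _

lemma left_mul (g h : Monoid.Coprod G₁ G₂) (x : XX H₁ H₂) :
    (Φ H₁ H₂ (g * h)).left x = (Φ H₁ H₂ g).left x *
      (Φ H₁ H₂ h).left ((Φ H₁ H₂ g).right.symm x) := by
  rw [map_mul]
  rfl

lemma left_inl (a : G₁) (x : XX H₁ H₂) :
    (Φ H₁ H₂ (Monoid.Coprod.inl a)).left x = αgen H₁ H₂ x.2 (sch H₁ a (a⁻¹ • x.1)) := by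
  rw [Φ_inl]; rfl

lemma left_inr (b : G₂) (x : XX H₁ H₂) :
    (Φ H₁ H₂ (Monoid.Coprod.inr b)).left x =
      (τgen H₁ H₂ x.1 x.2)⁻¹ * βgen H₁ H₂ x.1 (sch H₂ b (b⁻¹ • x.2)) *
        τgen H₁ H₂ x.1 (b⁻¹ • x.2) := by
  rw [Φ_inr]; rfl

lemma right_inl (a : G₁) (x : XX H₁ H₂) :
    (Φ H₁ H₂ (Monoid.Coprod.inl a)).right.symm x = (a⁻¹ • x.1, x.2) := by
  rw [Φ_inl]; rfl

lemma right_inr (b : G₂) (x : XX H₁ H₂) :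
    (Φ H₁ H₂ (Monoid.Coprod.inr b)).right.symm x = (x.1, b⁻¹ • x.2) := by
  rw [Φ_inr]; rfl

end Wreath
section Rho

universe u₁ u₂

variable {G₁ : Type u₁} {G₂ : Type u₂} [Group G₁] [Group G₂]
  (H₁ : Subgroup G₁) (H₂ : Subgroup G₂)
  (p : Monoid.Coprod G₁ G₂ →* G₁ × G₂)

lemma right_apply (hp₁ : ∀ g₁ : G₁, p (Monoid.Coprod.inl g₁) = (g₁, 1))
    (hp₂ : ∀ g₂ : G₂, p (Monoid.Coprod.inr g₂) = (1, g₂))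
    (g : Monoid.Coprod G₁ G₂) (x : XX H₁ H₂) :
    (Φ H₁ H₂ g).right x = ((p g).1 • x.1, (p g).2 • x.2) := by
  induction g using Monoid.Coprod.induction_on generalizing x with
  | inl a =>
    rw [Φ_inl, hp₁]
    show (a • x.1, x.2) = _
    simp
  | inr b =>
    rw [Φ_inr, hp₂]
    show (x.1, b • x.2) = _
    simp
  | mul g h ihg ihh =>
    rw [map_mul, map_mul]
    show (Φ H₁ H₂ g).right ((Φ H₁ H₂ h).right x) = _
    rw [ihh, ihg]
    simp [Prod.fst_mul, Prod.snd_mul, mul_smul]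

/-- The preimage subgroup. -/
abbrev NN : Subgroup (Monoid.Coprod G₁ G₂) := (H₁.prod H₂).comap p

lemma right_symm_fixed (hp₁ : ∀ g₁ : G₁, p (Monoid.Coprod.inl g₁) = (g₁, 1))
    (hp₂ : ∀ g₂ : G₂, p (Monoid.Coprod.inr g₂) = (1, g₂))
    {n : Monoid.Coprod G₁ G₂} (hn : n ∈ NN H₁ H₂ p) :
    (Φ H₁ H₂ n).right.symm (x₀ H₁ H₂) = x₀ H₁ H₂ := by
  rw [Equiv.symm_apply_eq, right_apply H₁ H₂ p hp₁ hp₂]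
  obtain ⟨h1, h2⟩ := (Subgroup.mem_comap.mp hn : p n ∈ H₁.prod H₂)
  rw [x₀]
  show _ = ((p n).1 • bp H₁, (p n).2 • bp H₂)
  rw [smul_bp_of_mem H₁ h1, smul_bp_of_mem H₂ h2]

/-- The rewriting homomorphism on the preimage subgroup. -/
noncomputable def ρ (hp₁ : ∀ g₁ : G₁, p (Monoid.Coprod.inl g₁) = (g₁, 1))
    (hp₂ : ∀ g₂ : G₂, p (Monoid.Coprod.inr g₂) = (1, g₂)) : NN H₁ H₂ p →* LL H₁ H₂ :=
  MonoidHom.mk' (fun n => (Φ H₁ H₂ (n : Monoid.Coprod G₁ G₂)).left (x₀ H₁ H₂))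
    (by
      intro n m
      show (Φ H₁ H₂ ((n : Monoid.Coprod G₁ G₂) * m)).left (x₀ H₁ H₂) = _
      rw [left_mul, right_symm_fixed H₁ H₂ p hp₁ hp₂ n.2])

end Rho
section Comp

universe u₁ u₂

variable {G₁ : Type u₁} {G₂ : Type u₂} [Group G₁] [Group G₂]
  (H₁ : Subgroup G₁) (H₂ : Subgroup G₂)

lemma right_symm_mul (g h : Monoid.Coprod G₁ G₂) (x : XX H₁ H₂) :
    (Φ H₁ H₂ (g * h)).right.symm x =
      (Φ H₁ H₂ h).right.symm ((Φ H₁ H₂ g).right.symm x) := by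
  rw [map_mul]
  rfl

lemma comp_α (v : G₂ ⧸ H₂) (h : H₁) :
    (Φ H₁ H₂ (ψ H₁ H₂ (αgen H₁ H₂ v h))).left (x₀ H₁ H₂) = αgen H₁ H₂ v h := by
  have hinv : (Monoid.Coprod.inr (sec H₂ v) : Monoid.Coprod G₁ G₂)⁻¹
      = Monoid.Coprod.inr (sec H₂ v)⁻¹ := (map_inv _ _).symm
  have hsm : ((h : G₁))⁻¹ • bp H₁ = bp H₁ := smul_bp_of_mem H₁ (inv_mem h.2)
  have hsch : sch H₁ (h : G₁) (bp H₁) = h := by rw [sch_of_mem H₁ h.2]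
  rw [ψ_α, hinv]
  simp only [left_mul, right_symm_mul, right_inr, right_inl, left_inr, left_inl, x₀, inv_inv,
    sec_smul_bp, sec_inv_smul, τgen_bp_left, τgen_bp_right, sch_sec_inv, sch_sec_one,
    map_one, one_mul, mul_one, inv_one, hsm, hsch]

lemma comp_β (u : G₁ ⧸ H₁) (h : H₂) :
    (Φ H₁ H₂ (ψ H₁ H₂ (βgen H₁ H₂ u h))).left (x₀ H₁ H₂) = βgen H₁ H₂ u h := by
  have hinv : (Monoid.Coprod.inl (sec H₁ u) : Monoid.Coprod G₁ G₂)⁻¹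
      = Monoid.Coprod.inl (sec H₁ u)⁻¹ := (map_inv _ _).symm
  have hsm : ((h : G₂))⁻¹ • bp H₂ = bp H₂ := smul_bp_of_mem H₂ (inv_mem h.2)
  have hsch : sch H₂ (h : G₂) (bp H₂) = h := by rw [sch_of_mem H₂ h.2]
  rw [ψ_β, hinv]
  simp only [left_mul, right_symm_mul, right_inr, right_inl, left_inr, left_inl, x₀, inv_inv,
    sec_smul_bp, sec_inv_smul, τgen_bp_left, τgen_bp_right, sch_sec_inv, sch_sec_one,
    map_one, one_mul, mul_one, inv_one, hsm, hsch]

lemma comp_τ (u : G₁ ⧸ H₁) (v : G₂ ⧸ H₂) :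
    (Φ H₁ H₂ (ψ H₁ H₂ (τgen H₁ H₂ u v))).left (x₀ H₁ H₂) = τgen H₁ H₂ u v := by
  have hinv1 : (Monoid.Coprod.inl (sec H₁ u) : Monoid.Coprod G₁ G₂)⁻¹
      = Monoid.Coprod.inl (sec H₁ u)⁻¹ := (map_inv _ _).symm
  have hinv2 : (Monoid.Coprod.inr (sec H₂ v) : Monoid.Coprod G₁ G₂)⁻¹
      = Monoid.Coprod.inr (sec H₂ v)⁻¹ := (map_inv _ _).symm
  rw [ψ_τ, gElt, hinv1, hinv2]
  simp only [left_mul, right_symm_mul, right_inr, right_inl, left_inr, left_inl, x₀, inv_inv,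
    sec_smul_bp, sec_inv_smul, τgen_bp_left, τgen_bp_right, sch_sec_inv, sch_sec_one,
    map_one, one_mul, mul_one, inv_one]

end Comp
section Assemble

universe u₁ u₂

variable {G₁ : Type u₁} {G₂ : Type u₂} [Group G₁] [Group G₂]
  (H₁ : Subgroup G₁) (H₂ : Subgroup G₂)
  (p : Monoid.Coprod G₁ G₂ →* G₁ × G₂)

open Monoid.Coprod

lemma of_eq_α (v : G₂ ⧸ H₂) (m : Fam H₁ H₂ (Sum.inl (Sum.inl v))) :
    Monoid.CoprodI.of m = αgen H₁ H₂ v (MulEquiv.ulift m) := rfl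

lemma of_eq_β (u : G₁ ⧸ H₁) (m : Fam H₁ H₂ (Sum.inl (Sum.inr u))) :
    Monoid.CoprodI.of m = βgen H₁ H₂ u (MulEquiv.ulift m) := rfl

lemma of_eq_f (m : Fam H₁ H₂ (Sum.inr ())) :
    Monoid.CoprodI.of m = fgen H₁ H₂ m := rfl

lemma ψ_fgen_of (t : FIdx H₁ H₂) :
    ψ H₁ H₂ (fgen H₁ H₂ (FreeGroup.of t)) = gElt H₁ H₂ t.1.1 t.2.1 := by
  show Monoid.CoprodI.lift (ψfam H₁ H₂) (Monoid.CoprodI.of _) = _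
  erw [Monoid.CoprodI.lift_of]
  simp [ψfam, FreeGroup.lift_apply_of]
  exact FreeGroup.lift_apply_of

lemma ψ_mem (hp₁ : ∀ g₁ : G₁, p (Monoid.Coprod.inl g₁) = (g₁, 1))
    (hp₂ : ∀ g₂ : G₂, p (Monoid.Coprod.inr g₂) = (1, g₂))
    (l : LL H₁ H₂) : ψ H₁ H₂ l ∈ NN H₁ H₂ p := by
  induction l using Monoid.CoprodI.induction_on with
  | one => rw [map_one]; exact one_mem _
  | mul x y hx hy => rw [map_mul]; exact mul_mem hx hy
  | of i m =>
    rcases i with (v | u) | ⟨⟩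
    · rw [of_eq_α, ψ_α, Subgroup.mem_comap]
      rw [map_mul, map_mul, map_inv, hp₁, hp₂]
      refine Subgroup.mem_prod.mpr ⟨?_, ?_⟩
      · simpa using (MulEquiv.ulift m).2
      · simpa using one_mem H₂
    · rw [of_eq_β, ψ_β, Subgroup.mem_comap]
      rw [map_mul, map_mul, map_inv, hp₁, hp₂]
      refine Subgroup.mem_prod.mpr ⟨?_, ?_⟩
      · simpa using one_mem H₁
      · simpa using (MulEquiv.ulift m).2
    · rw [of_eq_f]
      induction m using FreeGroup.induction_on with
      | C1 => rw [map_one, map_one]; exact one_mem _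
      | of t =>
        have hpu : (pure t : FreeGroup (FIdx H₁ H₂)) = FreeGroup.of t := rfl
        rw [ψ_fgen_of, Subgroup.mem_comap, gElt]
        rw [map_mul, map_mul, map_mul, map_inv, map_inv, hp₁, hp₂]
        refine Subgroup.mem_prod.mpr ⟨?_, ?_⟩
        · simpa using one_mem H₁
        · simpa using one_mem H₂
      | inv_of t ht => rw [map_inv, map_inv]; exact inv_mem ht
      | mul x y hx hy => rw [map_mul, map_mul]; exact mul_mem hx hy

/-- `ψ` [co]restricted to the preimage subgroup. -/
noncomputable def ψN (hp₁ : ∀ g₁ : G₁, p (Monoid.Coprod.inl g₁) = (g₁, 1))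
    (hp₂ : ∀ g₂ : G₂, p (Monoid.Coprod.inr g₂) = (1, g₂)) :
    LL H₁ H₂ →* NN H₁ H₂ p :=
  (ψ H₁ H₂).codRestrict _ (ψ_mem H₁ H₂ p hp₁ hp₂)

lemma ρ_ψN (hp₁ : ∀ g₁ : G₁, p (Monoid.Coprod.inl g₁) = (g₁, 1))
    (hp₂ : ∀ g₂ : G₂, p (Monoid.Coprod.inr g₂) = (1, g₂)) (l : LL H₁ H₂) :
    ρ H₁ H₂ p hp₁ hp₂ (ψN H₁ H₂ p hp₁ hp₂ l) = l := by
  induction l using Monoid.CoprodI.induction_on with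
  | one => rw [map_one, map_one]
  | mul x y hx hy => rw [map_mul, map_mul, hx, hy]
  | of i m =>
    have key : ∀ l : LL H₁ H₂,
        ρ H₁ H₂ p hp₁ hp₂ (ψN H₁ H₂ p hp₁ hp₂ l) =
          (Φ H₁ H₂ (ψ H₁ H₂ l)).left (x₀ H₁ H₂) := fun _ => rfl
    rcases i with (v | u) | ⟨⟩
    · rw [key, of_eq_α, comp_α]
    · rw [key, of_eq_β, comp_β]
    · rw [of_eq_f]
      induction m using FreeGroup.induction_on with
      | C1 => rw [map_one, map_one, map_one]
      | of t =>
        have hpu : (pure t : FreeGroup (FIdx H₁ H₂)) = FreeGroup.of t := rfl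
        rw [key]
        have : fgen H₁ H₂ (FreeGroup.of t) = τgen H₁ H₂ t.1.1 t.2.1 := by
          rw [τgen_of_ne H₁ H₂ t.1.2 t.2.2]
        rw [this, comp_τ]
      | inv_of t ht => rw [map_inv, map_inv, map_inv, ht]
      | mul x y hx hy => rw [map_mul, map_mul, map_mul, hx, hy]

end Assemble
section Surj

universe u₁ u₂

variable {G₁ : Type u₁} {G₂ : Type u₂} [Group G₁] [Group G₂]
  (H₁ : Subgroup G₁) (H₂ : Subgroup G₂)
  (p : Monoid.Coprod G₁ G₂ →* G₁ × G₂)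

open Monoid.Coprod

/-- Coset representatives. -/
noncomputable def rep (x : XX H₁ H₂) : Monoid.Coprod G₁ G₂ :=
  inl (sec H₁ x.1) * inr (sec H₂ x.2)

lemma rep_x₀ : rep H₁ H₂ (x₀ H₁ H₂) = 1 := by
  rw [rep, x₀]
  show (inl (sec H₁ (bp H₁)) : Monoid.Coprod G₁ G₂) * inr (sec H₂ (bp H₂)) = 1
  rw [sec_bp, sec_bp, map_one, map_one, one_mul]

lemma schreier (hp₁ : ∀ g₁ : G₁, p (Monoid.Coprod.inl g₁) = (g₁, 1))
    (hp₂ : ∀ g₂ : G₂, p (Monoid.Coprod.inr g₂) = (1, g₂))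
    (g : Monoid.Coprod G₁ G₂) :
    ∀ x : XX H₁ H₂,
      (rep H₁ H₂ ((p g).1 • x.1, (p g).2 • x.2))⁻¹ * g * rep H₁ H₂ x ∈
        (ψ H₁ H₂).range := by
  induction g using Monoid.Coprod.induction_on with
  | inl a =>
    intro x
    refine ⟨αgen H₁ H₂ x.2 (sch H₁ a x.1), ?_⟩
    rw [ψ_α, hp₁]
    simp only [one_smul]
    have hsch : (inl (↑(sch H₁ a x.1)) : Monoid.Coprod G₁ G₂) =
        (inl (sec H₁ (a • x.1)))⁻¹ * inl a * inl (sec H₁ x.1) := by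
      rw [sch_coe, map_mul, map_mul, map_inv]
    rw [hsch, rep, rep]
    show _ = (inl (sec H₁ (a • x.1)) * inr (sec H₂ x.2))⁻¹ * inl a *
      (inl (sec H₁ x.1) * inr (sec H₂ x.2))
    group
  | inr b =>
    intro x
    refine ⟨(τgen H₁ H₂ x.1 (b • x.2))⁻¹ * βgen H₁ H₂ x.1 (sch H₂ b x.2) *
      τgen H₁ H₂ x.1 x.2, ?_⟩
    rw [map_mul, map_mul, map_inv, ψ_τ, ψ_τ, ψ_β, hp₂]
    simp only [one_smul]
    have hsch : (inr (↑(sch H₂ b x.2)) : Monoid.Coprod G₁ G₂) =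
        (inr (sec H₂ (b • x.2)))⁻¹ * inr b * inr (sec H₂ x.2) := by
      rw [sch_coe, map_mul, map_mul, map_inv]
    rw [hsch, gElt, gElt, rep, rep]
    show _ = (inl (sec H₁ x.1) * inr (sec H₂ (b • x.2)))⁻¹ * inr b *
      (inl (sec H₁ x.1) * inr (sec H₂ x.2))
    group
  | mul g h ihg ihh =>
    intro x
    have key : (rep H₁ H₂ ((p (g * h)).1 • x.1, (p (g * h)).2 • x.2))⁻¹ * (g * h) *
        rep H₁ H₂ x =
        ((rep H₁ H₂ ((p g).1 • ((p h).1 • x.1), (p g).2 • ((p h).2 • x.2)))⁻¹ * g *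
          rep H₁ H₂ ((p h).1 • x.1, (p h).2 • x.2)) *
        ((rep H₁ H₂ ((p h).1 • x.1, (p h).2 • x.2))⁻¹ * h * rep H₁ H₂ x) := by
      rw [map_mul, Prod.fst_mul, Prod.snd_mul, mul_smul, mul_smul]
      group
    rw [key]
    exact mul_mem (ihg (((p h).1 • x.1, (p h).2 • x.2))) (ihh x)

lemma NN_le_range (hp₁ : ∀ g₁ : G₁, p (Monoid.Coprod.inl g₁) = (g₁, 1))
    (hp₂ : ∀ g₂ : G₂, p (Monoid.Coprod.inr g₂) = (1, g₂))
    {n : Monoid.Coprod G₁ G₂} (hn : n ∈ NN H₁ H₂ p) : n ∈ (ψ H₁ H₂).range := by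
  have h := schreier H₁ H₂ p hp₁ hp₂ n (x₀ H₁ H₂)
  obtain ⟨h1, h2⟩ := (Subgroup.mem_comap.mp hn : p n ∈ H₁.prod H₂)
  have hx : (((p n).1 • (x₀ H₁ H₂).1, (p n).2 • (x₀ H₁ H₂).2) : XX H₁ H₂) = x₀ H₁ H₂ := by
    rw [x₀]
    show ((p n).1 • bp H₁, (p n).2 • bp H₂) = _
    rw [smul_bp_of_mem H₁ h1, smul_bp_of_mem H₂ h2]
  rw [hx, rep_x₀, inv_one, one_mul, mul_one] at h
  exact h

end Surj
end KuroshAux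

/-- Let `p : G₁ ∗ G₂ → G₁ × G₂` be the canonical homomorphism from the free product to the
direct product (determined by `g₁ ↦ (g₁, 1)` and `g₂ ↦ (1, g₂)`).  If `H₁ ≤ G₁` and
`H₂ ≤ G₂` are free subgroups then the preimage `p⁻¹(H₁ × H₂)` is a free group, and if
moreover `H₁` and `H₂` have finite index then `p⁻¹(H₁ × H₂)` has finite index in
`G₁ ∗ G₂`. -/
theorem preimage_prod_free_subgroups (G₁ G₂ : Type*) [Group G₁] [Group G₂]
    (p : Monoid.Coprod G₁ G₂ →* G₁ × G₂)
    (hp₁ : ∀ g₁ : G₁, p (Monoid.Coprod.inl g₁) = (g₁, 1))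
    (hp₂ : ∀ g₂ : G₂, p (Monoid.Coprod.inr g₂) = (1, g₂))
    (H₁ : Subgroup G₁) (H₂ : Subgroup G₂)
    (hf₁ : IsFreeGroup H₁) (hf₂ : IsFreeGroup H₂) :
    IsFreeGroup ((H₁.prod H₂).comap p) ∧
      (H₁.FiniteIndex → H₂.FiniteIndex → ((H₁.prod H₂).comap p).FiniteIndex) := by
  constructor
  · haveI := hf₁
    haveI := hf₂
    haveI : ∀ i, IsFreeGroup (KuroshAux.Fam H₁ H₂ i) := by
      rintro ((v | u) | ⟨⟩)
      · exact IsFreeGroup.ofMulEquiv (MulEquiv.ulift.symm : H₁ ≃* ULift H₁)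
      · exact IsFreeGroup.ofMulEquiv (MulEquiv.ulift.symm : H₂ ≃* ULift H₂)
      · dsimp [KuroshAux.Fam]; infer_instance
    have hinj : Function.Injective (KuroshAux.ψN H₁ H₂ p hp₁ hp₂) := by
      intro a b hab
      have h := congrArg (KuroshAux.ρ H₁ H₂ p hp₁ hp₂) hab
      rwa [KuroshAux.ρ_ψN, KuroshAux.ρ_ψN] at h
    have hsurj : Function.Surjective (KuroshAux.ψN H₁ H₂ p hp₁ hp₂) := by
      rintro ⟨n, hn⟩
      obtain ⟨l, hl⟩ := KuroshAux.NN_le_range H₁ H₂ p hp₁ hp₂ hn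
      exact ⟨l, Subtype.ext hl⟩
    exact IsFreeGroup.ofMulEquiv (MulEquiv.ofBijective _ ⟨hinj, hsurj⟩)
  · intro h1 h2
    have hsurj : Function.Surjective p := by
      rintro ⟨g₁, g₂⟩
      exact ⟨Monoid.Coprod.inl g₁ * Monoid.Coprod.inr g₂, by
        rw [map_mul, hp₁, hp₂, Prod.mk_mul_mk, mul_one, one_mul]⟩
    refine ⟨?_⟩
    rw [(H₁.prod H₂).index_comap_of_surjective hsurj, Subgroup.index_prod]
    exact mul_ne_zero h1.index_ne_zero h2.index_ne_zero
end

section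
/- Let G be a group and H a normal subgroup of G of finite index, with quotient Q = G/H. Then there exists an injective group homomorphism from G into the wreath product H ≀ Q. -/
/-- The action of `B` on the direct product `B → A` by right translation of the index:
`(b • f) x = f (x * b)`. -/
def wreathAut (A B : Type*) [Group A] [Group B] : B →* MulAut (B → A) where
  toFun b :=
    { toFun := fun f x => f (x * b)
      invFun := fun f x => f (x * b⁻¹)
      left_inv := fun f => funext fun x => by simp
      right_inv := fun f => funext fun x => by simp
      map_mul' := fun f g => rfl }
  map_one' := by ext f x; simp
  map_mul' := fun b₁ b₂ => by ext f x; simp [mul_assoc]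

/-- The wreath product `A ≀ B` of groups: the semidirect product `(B → A) ⋊ B` with
respect to the action of `B` on `B → A` by right translation of the index. -/
abbrev WreathProduct (A B : Type*) [Group A] [Group B] :=
  SemidirectProduct (B → A) B (wreathAut A B)

/-- (Kaloujnine–Krasner) If `H` is a normal subgroup of finite index in `G` with quotient
`Q = G/H`, then `G` embeds into the wreath product `H ≀ Q`. -/
theorem exists_injective_monoidHom_wreathProduct (G : Type*) [Group G]
    (H : Subgroup G) [H.Normal] [H.FiniteIndex] :
    ∃ φ : G →* WreathProduct H (G ⧸ H), Function.Injective φ := by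
  classical
  set s : G ⧸ H → G := Quotient.out with hs_def
  have hs : ∀ q : G ⧸ H, ((s q : G) : G ⧸ H) = q := fun q => QuotientGroup.out_eq' q
  have hmem : ∀ (g : G) (q : G ⧸ H), s q * g * (s (q * (g : G ⧸ H)))⁻¹ ∈ H := by
    intro g q
    rw [← QuotientGroup.eq_one_iff]
    simp only [QuotientGroup.mk_mul, QuotientGroup.mk_inv, hs]
    group
  let fH : G → (G ⧸ H) → H := fun g q => ⟨s q * g * (s (q * (g : G ⧸ H)))⁻¹, hmem g q⟩
  refine ⟨{ toFun := fun g => ⟨fH g, (g : G ⧸ H)⟩, map_one' := ?_, map_mul' := ?_ }, ?_⟩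
  · refine SemidirectProduct.ext ?_ ?_
    · funext q
      ext
      simp [fH]
    · simp
  · intro g₁ g₂
    refine SemidirectProduct.ext ?_ ?_
    · funext q
      ext
      show s q * (g₁ * g₂) * (s (q * ((g₁ * g₂ : G) : G ⧸ H)))⁻¹
          = (s q * g₁ * (s (q * (g₁ : G ⧸ H)))⁻¹) *
            (s (q * (g₁ : G ⧸ H)) * g₂ * (s (q * (g₁ : G ⧸ H) * (g₂ : G ⧸ H)))⁻¹)
      rw [QuotientGroup.mk_mul, mul_assoc q]
      group
    · push_cast
      rfl
  · rw [injective_iff_map_eq_one]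
    intro g hg
    have h2 : ((g : G ⧸ H)) = 1 := congrArg SemidirectProduct.right hg
    have h1 : fH g = 1 := congrArg SemidirectProduct.left hg
    have h3 := congrFun h1 (1 : G ⧸ H)
    have h4 : s 1 * g * (s (1 * (g : G ⧸ H)))⁻¹ = 1 := congrArg Subtype.val h3
    rw [h2, mul_one] at h4
    rw [mul_inv_eq_one] at h4
    rwa [mul_eq_left] at h4
end

section
/- Let Γ be a group with a normal subgroup G of finite index and quotient Q = Γ/G, and let F' be a finite group. Set C = Q ≀ F'. Then there exists an injective group homomorphism from the wreath product Γ ≀ F' into the direct product of |Q × F'| copies of G ≀ C, i.e. into (Q × F') → (G ≀ C). -/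
section Aux

variable {Γ : Type*} [Group Γ] (G : Subgroup Γ) [G.Normal] (F' : Type*) [Group F']

/-- Pointwise quotient on the base group. -/
def WP.basePi : (F' → Γ) →* (F' → Γ ⧸ G) :=
  Pi.monoidHom fun y => (QuotientGroup.mk' G).comp (Pi.evalMonoidHom _ y)

/-- The induced homomorphism `Γ ≀ F' → (Γ/G) ≀ F'`. -/
def WP.piHom : WreathProduct Γ F' →* WreathProduct (Γ ⧸ G) F' :=
  SemidirectProduct.map (WP.basePi G F') (MonoidHom.id F') (fun t => by ext f y; rfl)

/-- A set-theoretic section of `WP.piHom`. -/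
noncomputable def WP.sigma (c : WreathProduct (Γ ⧸ G) F') : WreathProduct Γ F' :=
  ⟨fun y => (c.left y).out, c.right⟩

lemma WP.piHom_sigma (c : WreathProduct (Γ ⧸ G) F') :
    WP.piHom G F' (WP.sigma G F' c) = c := by
  ext
  · simp [WP.piHom, WP.sigma, WP.basePi, Pi.monoidHom]
  · rfl

/-- The "cocycle" `σ(c) p σ(c π(p))⁻¹`. -/
noncomputable def WP.u (p : WreathProduct Γ F') (c : WreathProduct (Γ ⧸ G) F') : WreathProduct Γ F' :=
  WP.sigma G F' c * p * (WP.sigma G F' (c * WP.piHom G F' p))⁻¹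

lemma WP.piHom_u (p : WreathProduct Γ F') (c : WreathProduct (Γ ⧸ G) F') :
    WP.piHom G F' (WP.u G F' p c) = 1 := by
  simp [WP.u, WP.piHom_sigma, mul_assoc]

lemma WP.u_right (p : WreathProduct Γ F') (c : WreathProduct (Γ ⧸ G) F') :
    (WP.u G F' p c).right = 1 := by
  have h := congrArg SemidirectProduct.right (WP.piHom_u G F' p c)
  simpa [WP.piHom] using h

lemma WP.u_left_mem (p : WreathProduct Γ F') (c : WreathProduct (Γ ⧸ G) F') (y : F') :
    (WP.u G F' p c).left y ∈ G := by
  have h := congrArg SemidirectProduct.left (WP.piHom_u G F' p c)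
  have h' := congrFun h y
  simpa [WP.piHom, WP.basePi, QuotientGroup.eq_one_iff, Pi.monoidHom] using h'

lemma WP.u_mul (p₁ p₂ : WreathProduct Γ F') (c : WreathProduct (Γ ⧸ G) F') :
    WP.u G F' (p₁ * p₂) c = WP.u G F' p₁ c * WP.u G F' p₂ (c * WP.piHom G F' p₁) := by
  simp [WP.u, map_mul, mul_assoc]

lemma WP.u_one (c : WreathProduct (Γ ⧸ G) F') : WP.u G F' 1 c = 1 := by
  simp [WP.u]

/-- The embedding. -/
noncomputable def WP.phi : WreathProduct Γ F' →
    ((Γ ⧸ G) × F' → WreathProduct G (WreathProduct (Γ ⧸ G) F')) := fun p qy =>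
  ⟨fun c => ⟨(WP.u G F' p c).left qy.2, WP.u_left_mem G F' p c qy.2⟩, WP.piHom G F' p⟩

end Aux

/-- If `G` is a normal subgroup of finite index in `Γ` with quotient `Q = Γ/G`, and `F'` is
a finite group, then with `C = Q ≀ F'` the wreath product `Γ ≀ F'` embeds into the direct
product of `|Q × F'|` copies of `G ≀ C`. -/
theorem wreathProduct_embeds_pi_wreathProduct (Γ : Type*) [Group Γ]
    (G : Subgroup Γ) [G.Normal] [G.FiniteIndex] (F' : Type*) [Group F'] [Finite F'] :
    ∃ φ : WreathProduct Γ F' →*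
        ((Γ ⧸ G) × F' → WreathProduct G (WreathProduct (Γ ⧸ G) F')),
      Function.Injective φ := by
  classical
  refine ⟨{ toFun := WP.phi G F', map_one' := ?_, map_mul' := ?_ }, ?_⟩
  · funext qy
    ext c
    · simp [WP.phi, WP.u_one]
    · simp [WP.phi, WP.piHom]
    · simp [WP.phi, WP.piHom]
  · intro p₁ p₂
    funext qy
    ext c
    · show ((WP.u G F' (p₁ * p₂) c).left qy.2 : Γ) = _
      rw [WP.u_mul]
      simp [WP.phi, SemidirectProduct.mul_left, WP.u_right, wreathAut, -SemidirectProduct.mk_eq_inl_mul_inr]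
      rfl
    · simp [WP.phi, WP.piHom]
    · simp [WP.phi, WP.piHom]
  · rw [injective_iff_map_eq_one]
    intro p hp
    obtain ⟨y⟩ : Nonempty F' := One.instNonempty
    have h := congrFun hp (1, y)
    have hπ : WP.piHom G F' p = 1 := congrArg SemidirectProduct.right h
    have hleft : ∀ z : F', (WP.u G F' p 1).left z = 1 := by
      intro z
      have hz := congrFun hp (1, z)
      have := congrFun (congrArg SemidirectProduct.left hz) 1
      exact congrArg Subtype.val this
    have hu : WP.u G F' p 1 = 1 := by
      ext z
      · exact hleft z
      · exact WP.u_right G F' p 1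
    have : WP.sigma G F' 1 * p * (WP.sigma G F' 1)⁻¹ = 1 := by
      simpa [WP.u, hπ] using hu
    have := congrArg (fun x => (WP.sigma G F' 1)⁻¹ * x * WP.sigma G F' 1) this
    simpa [mul_assoc] using this
end
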